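/- Let a ≥ b be positive integers and c a positive integer with gcd(a,c) = gcd(b,c) = 1, let Γ be the Z-grading of K[x,y,z] with deg x = a, deg y = b, deg z = −c, and let Γ̃ be the Z/cZ-grading of K[u,v] with deg u = a mod c, deg v = b mod c. Let φ̃ = (f̃, g̃) be a Γ̃-graded automorphism of K[u,v]. Then there is NO Γ-graded automorphism φ of K[x,y,z] fixing z with φ(x)(u,v,1) = f̃ and φ(y)(u,v,1) = g̃ if and only if f̃ contains a monomial v^q with nonzero coefficient such that bq < a, or g̃ has nonzero constant term. -/

import Mathlib

open MvPolynomial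

/-- For the `ℤ`-grading of `K[x,y,z]` with weights `w`, an automorphism is *graded*
if it maps each homogeneous component into itself. -/
def IsGraded3 {K : Type*} [CommRing K] (w : Fin 3 → ℤ)
    (φ : MvPolynomial (Fin 3) K ≃ₐ[K] MvPolynomial (Fin 3) K) : Prop :=
  ∀ (d : ℤ) (f : MvPolynomial (Fin 3) K),
    f.IsWeightedHomogeneous w d → (φ f).IsWeightedHomogeneous w d

/-- For the `ℤ/cℤ`-grading of `K[u,v]` with weights `w`, an automorphism is *graded*
if it maps each homogeneous component into itself. -/
def IsGraded2 {K : Type*} [CommRing K] {c : ℕ} (w : Fin 2 → ZMod c)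
    (φ : MvPolynomial (Fin 2) K ≃ₐ[K] MvPolynomial (Fin 2) K) : Prop :=
  ∀ (d : ZMod c) (f : MvPolynomial (Fin 2) K),
    f.IsWeightedHomogeneous w d → (φ f).IsWeightedHomogeneous w d

/-- The restriction homomorphism `K[x,y,z] → K[u,v]`, `x ↦ u`, `y ↦ v`, `z ↦ 1`,
i.e. restriction of functions to the plane `z = 1`. -/
noncomputable def restrict (K : Type*) [CommRing K] :
    MvPolynomial (Fin 3) K →ₐ[K] MvPolynomial (Fin 2) K :=
  aeval ![X 0, X 1, 1]

/-!
Restricting to `z = 1` identifies the `Γ`-homogeneous polynomials of degree `e ≥ 0` with the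
polynomials in `u, v` whose monomials `u^i v^j` all satisfy `a i + b j ≥ e` and
`a i + b j ≡ e (mod c)`: the lift of `u^i v^j` is `x^i y^j z^k` with `c k = a i + b j - e`.
Hence `φ̃` lifts to a graded endomorphism fixing `z` exactly when `f̃` and `g̃` lie in the steps
`a` and `b` of the `(a, b)`-weight filtration, which is what the two conditions say. The lifts of
`φ̃` and `φ̃⁻¹` are then mutually inverse, since restriction is injective on homogeneous
components; this needs `φ̃⁻¹` to preserve the filtration too, which holds because `φ̃` induces a
surjective, hence injective, endomorphism of the finite-dimensional quotient by each step.
-/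

theorem Submodule.comap_le_of_surjective_of_finite_quotient {R M : Type*} [CommRing R]
    [AddCommGroup M] [Module R M] {W : Submodule R M} [Module.Finite R (M ⧸ W)]
    {T : M →ₗ[R] M} (hT : Function.Surjective T) (hW : W ≤ W.comap T) : W.comap T ≤ W := by
  have hsurj : Function.Surjective (W.mapQ W T hW) := by
    rintro ⟨v⟩
    obtain ⟨u, rfl⟩ := hT v
    exact ⟨W.mkQ u, rfl⟩
  intro p hp
  rw [← Submodule.Quotient.mk_eq_zero]
  apply OrzechProperty.injective_of_surjective_endomorphism _ hsurj
  simpa [Submodule.Quotient.mk_eq_zero] using hp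

namespace MvPolynomial

variable {R σ τ : Type*}

section Graded

variable [CommSemiring R] {ι : Type*} [AddCommMonoid ι]

theorem aeval_monomial_mem_graded {A : ι → Submodule R (MvPolynomial τ R)}
    [SetLike.GradedMonoid A] {f : σ → MvPolynomial τ R} {w : σ → ι}
    (hf : ∀ i, f i ∈ A (w i)) (d : σ →₀ ℕ) (r : R) :
    aeval f (monomial d r) ∈ A (Finsupp.weight w d) := by
  rw [aeval_monomial, ← Algebra.smul_def, Finsupp.weight_apply, Finsupp.prod,
    Finsupp.sum]
  exact Submodule.smul_mem _ _ (SetLike.prod_pow_mem_graded A _ _ _ fun i _ => hf i)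

theorem IsWeightedHomogeneous.aeval {f : σ → MvPolynomial τ R} {w : σ → ι} {v : τ → ι}
    (hf : ∀ i, (f i).IsWeightedHomogeneous v (w i)) {p : MvPolynomial σ R} {m : ι}
    (hp : p.IsWeightedHomogeneous w m) : (aeval f p).IsWeightedHomogeneous v m := by
  have := WeightedHomogeneousSubmodule.gradedMonoid (R := R) (w := v)
  rw [p.as_sum, map_sum]
  refine IsWeightedHomogeneous.sum _ _ _ fun d hd => ?_
  rw [← hp (mem_support_iff.mp hd)]
  exact aeval_monomial_mem_graded (A := weightedHomogeneousSubmodule R v) hf d _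

end Graded

section Filtration

variable (R) [CommSemiring R]

noncomputable def weightFiltration (w : σ → ℕ) (s : ℕ) : Submodule R (MvPolynomial σ R) :=
  restrictSupport R {d | s ≤ Finsupp.weight w d}

variable {R} {w : σ → ℕ}

theorem mem_weightFiltration {s : ℕ} {p : MvPolynomial σ R} :
    p ∈ weightFiltration R w s ↔ ∀ d ∈ p.support, s ≤ Finsupp.weight w d :=
  mem_restrictSupport_iff R

theorem weightFiltration_antitone : Antitone (weightFiltration R w) :=
  fun _ _ hst => restrictSupport_mono R fun _ hd => le_trans hst hd

instance : SetLike.GradedMonoid (weightFiltration R w) where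
  one_mem := by simp [weightFiltration]
  mul_mem s t p q hp hq := by
    refine restrictSupport_mono R ?_ ((restrictSupport_add R _ _).ge (Submodule.mul_mem_mul hp hq))
    rintro _ ⟨d, hd, e, he, rfl⟩
    simp only [Set.mem_ofPred_eq, map_add] at hd he ⊢
    omega

theorem X_mem_weightFiltration (i : σ) : X i ∈ weightFiltration R w (w i) := by
  classical
  simp [weightFiltration, X, Finsupp.weight_single]

theorem aeval_mem_weightFiltration {v : τ → ℕ} {f : σ → MvPolynomial τ R}
    (hf : ∀ i, f i ∈ weightFiltration R v (w i)) {s : ℕ} {p : MvPolynomial σ R}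
    (hp : p ∈ weightFiltration R w s) : aeval f p ∈ weightFiltration R v s := by
  rw [p.as_sum, map_sum]
  exact Submodule.sum_mem _ fun d hd =>
    weightFiltration_antitone (mem_weightFiltration.mp hp d hd) (aeval_monomial_mem_graded hf d _)

theorem mem_weightFiltration_iff_constantCoeff_eq_zero {s : ℕ} (hs : 0 < s)
    (hw : ∀ i, s ≤ w i) {p : MvPolynomial σ R} :
    p ∈ weightFiltration R w s ↔ constantCoeff p = 0 := by
  rw [mem_weightFiltration, constantCoeff_eq, ← notMem_support_iff]
  constructor
  · intro h h0
    simpa using (h 0 h0).trans_lt' hs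
  · intro h0 d hd
    obtain ⟨i, hi⟩ : ∃ i, d i ≠ 0 := by
      by_contra! h
      exact h0 (by rwa [show d = 0 from Finsupp.ext h] at hd)
    exact (hw i).trans (Finsupp.le_weight_of_ne_zero' w hi)

theorem mem_weightFiltration_iff_coeff_single_one {a b : ℕ} {p : MvPolynomial (Fin 2) R} :
    p ∈ weightFiltration R ![a, b] a ↔ ∀ q, coeff (Finsupp.single 1 q) p ≠ 0 → a ≤ b * q := by
  rw [mem_weightFiltration]
  refine ⟨fun h q hq => ?_, fun h d hd => ?_⟩
  · simpa [Finsupp.weight_single, mul_comm] using h _ (mem_support_iff.mpr hq)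
  by_cases h₀ : d 0 = 0
  · have hd₁ : d = Finsupp.single 1 (d 1) := by
      ext i; fin_cases i <;> simp [h₀]
    rw [hd₁] at hd ⊢
    simpa [Finsupp.weight_single, mul_comm] using h _ (mem_support_iff.mp hd)
  · exact Finsupp.le_weight_of_ne_zero' ![a, b] h₀

end Filtration

section FiniteCodimension

variable [CommRing R] {w : σ → ℕ}

theorem finite_quotient_weightFiltration [Finite σ] (hw : ∀ i, w i ≠ 0) (s : ℕ) :
    Module.Finite R (MvPolynomial σ R ⧸ weightFiltration R w s) := by
  have : Finite {d : σ →₀ ℕ | Finsupp.weight w d ≤ s} :=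
    (Finsupp.finite_of_nat_weight_le w hw s).to_subtype
  have hL : weightFiltration R w s ⊔ restrictSupport R {d | Finsupp.weight w d ≤ s} = ⊤ := by
    rw [weightFiltration, restrictSupport_eq_span, restrictSupport_eq_span, ← Submodule.span_union,
      ← Set.image_union, ← restrictSupport_eq_span, eq_top_iff, ← restrictSupport_univ]
    exact restrictSupport_mono R fun d _ => le_total s _
  have : Module.Finite R (restrictSupport R {d | Finsupp.weight w d ≤ s}) :=
    Module.Finite.of_basis (basisRestrictSupport R _)
  have := Module.Finite.map (restrictSupport R {d | Finsupp.weight w d ≤ s})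
    (weightFiltration R w s).mkQ
  rw [(Submodule.map_mkQ_eq_top _ _).mpr hL] at this
  exact Module.Finite.equiv (LinearEquiv.ofTop ⊤ rfl)

theorem symm_X_mem_weightFiltration [Finite σ] (hw : ∀ i, w i ≠ 0)
    {e : MvPolynomial σ R ≃ₐ[R] MvPolynomial σ R} (he : ∀ i, e (X i) ∈ weightFiltration R w (w i))
    (i : σ) : e.symm (X i) ∈ weightFiltration R w (w i) := by
  have := finite_quotient_weightFiltration (R := R) hw (w i)
  refine Submodule.comap_le_of_surjective_of_finite_quotient (T := e.toLinearMap) e.surjective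
    (fun p hp => ?_) (by simpa using X_mem_weightFiltration i)
  rw [Submodule.mem_comap, AlgEquiv.toLinearMap_apply,
    show e p = aeval (fun j => e (X j)) p from AlgHom.congr_fun (aeval_unique e.toAlgHom) p]
  exact aeval_mem_weightFiltration he hp

end FiniteCodimension

section WeightedHomogeneous

variable [CommSemiring R] {M : Type*} [AddCommMonoid M] {w : σ → M}

theorem weightedHomogeneousComponent_map {φ : MvPolynomial σ R →ₗ[R] MvPolynomial σ R}
    (hφ : ∀ m p, p.IsWeightedHomogeneous w m → (φ p).IsWeightedHomogeneous w m)
    (m : M) (p : MvPolynomial σ R) :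
    weightedHomogeneousComponent w m (φ p) = φ (weightedHomogeneousComponent w m p) := by
  classical
  have hfin := weightedHomogeneousComponent_finsupp (w := w) p
  conv_lhs => rw [← sum_weightedHomogeneousComponent w p, map_finsum φ hfin,
    map_finsum (weightedHomogeneousComponent w m) (hfin.fun_comp φ.map_zero)]
  have hφc n := hφ n _ (weightedHomogeneousComponent_isWeightedHomogeneous (R := R) (w := w) n p)
  rw [finsum_eq_single _ m fun n hn => (hφc n).weightedHomogeneousComponent_ne m hn.symm,
    (hφc m).weightedHomogeneousComponent_same]

theorem IsWeightedHomogeneous.algEquiv_symm {φ : MvPolynomial σ R ≃ₐ[R] MvPolynomial σ R}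
    (hφ : ∀ m p, p.IsWeightedHomogeneous w m → (φ p).IsWeightedHomogeneous w m)
    {m : M} {p : MvPolynomial σ R} (hp : p.IsWeightedHomogeneous w m) :
    (φ.symm p).IsWeightedHomogeneous w m := by
  rw [← sum_weightedHomogeneousComponent w (φ.symm p), finsum_eq_single _ m fun n hn => ?_]
  · exact weightedHomogeneousComponent_isWeightedHomogeneous m _
  · apply φ.injective
    have := weightedHomogeneousComponent_map (φ := φ.toLinearMap) hφ n (φ.symm p)
    simp only [AlgEquiv.toLinearMap_apply, AlgEquiv.apply_symm_apply] at this
    rw [← this, hp.weightedHomogeneousComponent_ne n hn, map_zero]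

end WeightedHomogeneous

end MvPolynomial

section Restriction

variable {K : Type*} [CommRing K] {a b c : ℕ}

local notation "Γ" => ![(a : ℤ), (b : ℤ), -(c : ℤ)]

noncomputable def restrictExponent (m : Fin 3 →₀ ℕ) : Fin 2 →₀ ℕ :=
  Finsupp.equivFunOnFinite.symm ![m 0, m 1]

@[simp]
theorem restrict_X (i : Fin 3) : restrict K (X i) = ![X 0, X 1, 1] i :=
  aeval_X _ _

theorem restrict_monomial (m : Fin 3 →₀ ℕ) (r : K) :
    restrict K (monomial m r) = monomial (restrictExponent m) r := by
  rw [restrict, aeval_monomial, Finsupp.prod_pow, Fin.prod_univ_three, algebraMap_eq]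
  simp only [Matrix.cons_val, one_pow, mul_one, X_pow_eq_monomial, monomial_mul, C_mul_monomial,
    mul_one]
  congr
  ext i
  fin_cases i <;> simp [restrictExponent]

theorem weight_eq_restrictExponent (m : Fin 3 →₀ ℕ) :
    Finsupp.weight Γ m =
      (Finsupp.weight ![a, b] (restrictExponent m) : ℤ) - c * m 2 := by
  simp [Finsupp.weight_eq_sum, Fin.sum_univ_three, restrictExponent]
  ring

theorem restrict_mem_weightFiltration {e : ℕ} {P : MvPolynomial (Fin 3) K}
    (hP : P.IsWeightedHomogeneous Γ e) :
    restrict K P ∈ weightFiltration K ![a, b] e := by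
  rw [P.as_sum, map_sum]
  refine Submodule.sum_mem _ fun m hm => ?_
  rw [restrict_monomial]
  refine (monomial_mem_restrictSupport ..).mpr (Or.inl ?_)
  have := hP (mem_support_iff.mp hm)
  rw [weight_eq_restrictExponent] at this
  have : (0 : ℤ) ≤ c * m 2 := by positivity
  show e ≤ _
  omega

theorem eq_of_restrictExponent_eq (hc : c ≠ 0) {m m' : Fin 3 →₀ ℕ}
    (h : restrictExponent m = restrictExponent m')
    (hw : Finsupp.weight Γ m =
      Finsupp.weight Γ m') : m = m' := by
  rw [weight_eq_restrictExponent, weight_eq_restrictExponent, h] at hw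
  have h2 : m 2 = m' 2 := by
    have : (c : ℤ) * m 2 = c * m' 2 := by linarith
    exact_mod_cast mul_left_cancel₀ (by exact_mod_cast hc) this
  ext i
  fin_cases i
  · simpa [restrictExponent] using congrArg (· 0) h
  · simpa [restrictExponent] using congrArg (· 1) h
  · exact h2

theorem coeff_restrict_of_isWeightedHomogeneous (hc : c ≠ 0) {e : ℤ} {P : MvPolynomial (Fin 3) K}
    (hP : P.IsWeightedHomogeneous Γ e) {m : Fin 3 →₀ ℕ}
    (hm : Finsupp.weight Γ m = e) :
    coeff (restrictExponent m) (restrict K P) = coeff m P := by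
  classical
  conv_lhs => rw [P.as_sum, map_sum, coeff_sum]
  simp_rw [restrict_monomial, coeff_monomial]
  rw [Finset.sum_eq_single m (fun m' hm' hne => if_neg fun h => hne ?_) (fun hm => ?_), if_pos rfl]
  · exact eq_of_restrictExponent_eq hc h ((hP (mem_support_iff.mp hm')).trans hm.symm)
  · rw [if_pos rfl, notMem_support_iff.mp hm]

theorem eq_of_restrict_eq (hc : c ≠ 0) {e : ℤ} {P Q : MvPolynomial (Fin 3) K}
    (hP : P.IsWeightedHomogeneous Γ e)
    (hQ : Q.IsWeightedHomogeneous Γ e)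
    (h : restrict K P = restrict K Q) : P = Q := by
  ext m
  by_cases hm : Finsupp.weight Γ m = e
  · rw [← coeff_restrict_of_isWeightedHomogeneous hc hP hm,
      ← coeff_restrict_of_isWeightedHomogeneous hc hQ hm, h]
  · rw [hP.coeff_eq_zero m hm, hQ.coeff_eq_zero m hm]

theorem exists_isWeightedHomogeneous_restrict_eq {e : ℕ} {p : MvPolynomial (Fin 2) K}
    (hp : p.IsWeightedHomogeneous ![(a : ZMod c), (b : ZMod c)] (e : ZMod c))
    (hpF : p ∈ weightFiltration K ![a, b] e) :
    ∃ P : MvPolynomial (Fin 3) K,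
      P.IsWeightedHomogeneous Γ e ∧ restrict K P = p := by
  have hlift : ∀ d ∈ p.support, ∃ m, restrictExponent m = d ∧
      Finsupp.weight Γ m = e := by
    intro d hd
    have hle := mem_weightFiltration.mp hpF d hd
    have hmod : (Finsupp.weight ![a, b] d : ZMod c) = e := by
      rw [← hp (mem_support_iff.mp hd)]
      simp [Finsupp.weight_eq_sum]
    obtain ⟨k, hk⟩ :=
      (Nat.modEq_iff_dvd' hle).mp ((ZMod.natCast_eq_natCast_iff _ _ _).mp hmod).symm
    have hd : Finsupp.equivFunOnFinite.symm ![d 0, d 1] = d := by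
      ext i; fin_cases i <;> rfl
    refine ⟨Finsupp.equivFunOnFinite.symm ![d 0, d 1, k], by simpa [restrictExponent] using hd, ?_⟩
    rw [weight_eq_restrictExponent]
    simp [restrictExponent, hd]
    omega
  choose! m hm using hlift
  refine ⟨∑ d ∈ p.support, monomial (m d) (coeff d p), IsWeightedHomogeneous.sum _ _ _
    fun d hd => isWeightedHomogeneous_monomial _ _ _ (hm d hd).2, ?_⟩
  conv_rhs => rw [p.as_sum]
  rw [map_sum]
  exact Finset.sum_congr rfl fun d hd => by rw [restrict_monomial, (hm d hd).1]

theorem exists_graded_algHom_restrict_comp {ψ : MvPolynomial (Fin 2) K →ₐ[K] MvPolynomial (Fin 2) K}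
    (hψ₀ : (ψ (X 0)).IsWeightedHomogeneous ![(a : ZMod c), (b : ZMod c)] (a : ZMod c))
    (hψ₁ : (ψ (X 1)).IsWeightedHomogeneous ![(a : ZMod c), (b : ZMod c)] (b : ZMod c))
    (hF₀ : ψ (X 0) ∈ weightFiltration K ![a, b] a) (hF₁ : ψ (X 1) ∈ weightFiltration K ![a, b] b) :
    ∃ σ : MvPolynomial (Fin 3) K →ₐ[K] MvPolynomial (Fin 3) K,
      (∀ (d : ℤ) P, P.IsWeightedHomogeneous Γ d →
        (σ P).IsWeightedHomogeneous Γ d) ∧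
      σ (X 2) = X 2 ∧ (restrict K).comp σ = ψ.comp (restrict K) := by
  obtain ⟨F, hF, hFr⟩ := exists_isWeightedHomogeneous_restrict_eq hψ₀ hF₀
  obtain ⟨G, hG, hGr⟩ := exists_isWeightedHomogeneous_restrict_eq hψ₁ hF₁
  refine ⟨aeval ![F, G, X 2], fun d P hP => hP.aeval fun i => ?_, by simp,
    algHom_ext fun i => ?_⟩
  · fin_cases i
    exacts [hF, hG, isWeightedHomogeneous_X K _ 2]
  · fin_cases i <;> simp [hFr, hGr]

theorem eq_id_of_restrict_comp (hc : c ≠ 0)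
    {σ : MvPolynomial (Fin 3) K →ₐ[K] MvPolynomial (Fin 3) K}
    (hσ : ∀ (d : ℤ) P, P.IsWeightedHomogeneous Γ d →
      (σ P).IsWeightedHomogeneous Γ d)
    (h₂ : σ (X 2) = X 2) (hr : (restrict K).comp σ = restrict K) : σ = AlgHom.id K _ := by
  refine algHom_ext fun i => ?_
  fin_cases i
  · exact eq_of_restrict_eq hc (hσ _ _ (isWeightedHomogeneous_X K _ 0))
      (isWeightedHomogeneous_X K _ 0) (AlgHom.congr_fun hr (X 0))
  · exact eq_of_restrict_eq hc (hσ _ _ (isWeightedHomogeneous_X K _ 1))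
      (isWeightedHomogeneous_X K _ 1) (AlgHom.congr_fun hr (X 1))
  · exact h₂

theorem exists_graded_lift_iff (ha : a ≠ 0) (hb : b ≠ 0) (hc : c ≠ 0)
    {φt : MvPolynomial (Fin 2) K ≃ₐ[K] MvPolynomial (Fin 2) K}
    (hφt : IsGraded2 ![(a : ZMod c), (b : ZMod c)] φt) :
    (∃ φ : MvPolynomial (Fin 3) K ≃ₐ[K] MvPolynomial (Fin 3) K,
        IsGraded3 Γ φ ∧ φ (X 2) = X 2 ∧
        restrict K (φ (X 0)) = φt (X 0) ∧ restrict K (φ (X 1)) = φt (X 1)) ↔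
      φt (X 0) ∈ weightFiltration K ![a, b] a ∧ φt (X 1) ∈ weightFiltration K ![a, b] b := by
  constructor
  · rintro ⟨φ, hφ, -, h₀, h₁⟩
    rw [← h₀, ← h₁]
    exact ⟨restrict_mem_weightFiltration (hφ _ _ (isWeightedHomogeneous_X K _ 0)),
      restrict_mem_weightFiltration (hφ _ _ (isWeightedHomogeneous_X K _ 1))⟩
  · rintro ⟨h₀, h₁⟩
    have hX₀ := isWeightedHomogeneous_X K ![(a : ZMod c), (b : ZMod c)] 0
    have hX₁ := isWeightedHomogeneous_X K ![(a : ZMod c), (b : ZMod c)] 1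
    have hsymm := symm_X_mem_weightFiltration (w := ![a, b]) (e := φt)
      (fun i => by fin_cases i <;> simpa) (fun i => by fin_cases i; exacts [h₀, h₁])
    obtain ⟨σ, hσ, hσ₂, hσr⟩ := exists_graded_algHom_restrict_comp (ψ := φt.toAlgHom)
      (hφt _ _ hX₀) (hφt _ _ hX₁) h₀ h₁
    obtain ⟨τ, hτ, hτ₂, hτr⟩ := exists_graded_algHom_restrict_comp (ψ := φt.symm.toAlgHom)
      (hX₀.algEquiv_symm hφt) (hX₁.algEquiv_symm hφt) (hsymm 0) (hsymm 1)
    have hστ : σ.comp τ = AlgHom.id K _ :=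
      eq_id_of_restrict_comp hc (fun d P hP => hσ _ _ (hτ _ _ hP)) (by simp [hσ₂, hτ₂]) (by
        rw [← AlgHom.comp_assoc, hσr, AlgHom.comp_assoc, hτr, ← AlgHom.comp_assoc]
        simp)
    have hτσ : τ.comp σ = AlgHom.id K _ :=
      eq_id_of_restrict_comp hc (fun d P hP => hτ _ _ (hσ _ _ hP)) (by simp [hσ₂, hτ₂]) (by
        rw [← AlgHom.comp_assoc, hτr, AlgHom.comp_assoc, hσr, ← AlgHom.comp_assoc]
        simp)
    refine ⟨AlgEquiv.ofAlgHom σ τ hστ hτσ, hσ, hσ₂, ?_, ?_⟩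
    · simpa using AlgHom.congr_fun hσr (X 0)
    · simpa using AlgHom.congr_fun hσr (X 1)

end Restriction

/-- Here `x = X 0`, `y = X 1`, `z = X 2`, `u = X 0`, `v = X 1`. -/
theorem no_lift_iff_low_monomial_or_constant_term_general
    {K : Type*} [Field K]
    (a b c : ℕ) (ha : 0 < a) (hb : 0 < b) (hc : 0 < c) (hab : b ≤ a)
    (φt : MvPolynomial (Fin 2) K ≃ₐ[K] MvPolynomial (Fin 2) K)
    (hφt : IsGraded2 ![(a : ZMod c), (b : ZMod c)] φt) :
    (¬ ∃ φ : MvPolynomial (Fin 3) K ≃ₐ[K] MvPolynomial (Fin 3) K,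
        IsGraded3 ![(a : ℤ), (b : ℤ), -(c : ℤ)] φ ∧ φ (X 2) = X 2 ∧
        restrict K (φ (X 0)) = φt (X 0) ∧ restrict K (φ (X 1)) = φt (X 1)) ↔
      ((∃ q : ℕ, (φt (X 0)).coeff (Finsupp.single 1 q) ≠ 0 ∧ b * q < a) ∨
        constantCoeff (φt (X 1)) ≠ 0) := by
  rw [exists_graded_lift_iff ha.ne' hb.ne' hc.ne' hφt, mem_weightFiltration_iff_coeff_single_one,
    mem_weightFiltration_iff_constantCoeff_eq_zero hb fun i => by fin_cases i <;> simp [hab]]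
  simp only [not_and_or, not_forall, not_le, exists_prop]

/-- Let `a ≥ b > 0`, `c > 0` with `gcd(a,c) = gcd(b,c) = 1`, let `Γ` be the
`ℤ`-grading of `K[x,y,z]` with `deg x = a`, `deg y = b`, `deg z = -c`, and let `Γ̃` be
the `ℤ/cℤ`-grading of `K[u,v]` with `deg u = a mod c`, `deg v = b mod c`. Let
`φ̃ = (f̃, g̃)` be a `Γ̃`-graded automorphism of `K[u,v]`. Then `φ̃` admits no lift to a
`Γ`-graded automorphism of `K[x,y,z]` fixing `z` if and only if `f̃` contains a
monomial `v^q` with `bq < a`, or `g̃` has nonzero constant term.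
Here `x = X 0`, `y = X 1`, `z = X 2`, `u = X 0`, `v = X 1`. -/
theorem no_lift_iff_low_monomial_or_constant_term
    {K : Type*} [Field K] [IsAlgClosed K] [CharZero K]
    (a b c : ℕ) (ha : 0 < a) (hb : 0 < b) (hc : 0 < c) (hab : b ≤ a)
    (hac : Nat.gcd a c = 1) (hbc : Nat.gcd b c = 1)
    (φt : MvPolynomial (Fin 2) K ≃ₐ[K] MvPolynomial (Fin 2) K)
    (hφt : IsGraded2 ![(a : ZMod c), (b : ZMod c)] φt) :
    (¬ ∃ φ : MvPolynomial (Fin 3) K ≃ₐ[K] MvPolynomial (Fin 3) K,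
        IsGraded3 ![(a : ℤ), (b : ℤ), -(c : ℤ)] φ ∧ φ (X 2) = X 2 ∧
        restrict K (φ (X 0)) = φt (X 0) ∧ restrict K (φ (X 1)) = φt (X 1)) ↔
      ((∃ q : ℕ, (φt (X 0)).coeff (Finsupp.single 1 q) ≠ 0 ∧ b * q < a) ∨
        constantCoeff (φt (X 1)) ≠ 0) :=
  no_lift_iff_low_monomial_or_constant_term_general a b c ha hb hc hab φt hφt
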